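/- For every quadruple (k,d,i,j) of natural numbers with k ≥ 1 and d ≥ 1, the pair (kd + id + j(i+1)(2(k−1)d+1), d + j(2(k−1)d+1)) is reachable from (1,1) under the maps Ĝ(x,y)=(x+y,y) and Ŝ(x,y)=(3x−2y+1,2x−y+1). -/

import Mathlib

/-! Starting from `(1, 1)`, apply `Ŝ` `d - 1` times, `Ĝ` `k - 1` times, `Ŝ` `j` times and
`Ĝ` `i` times. Both maps have closed-form iterates: `Ĝ` fixes `y` and translates `x` by `y`,
while `Ŝ` fixes `x - y` and translates both coordinates by `2 (x - y) + 1`. -/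

def Ghat (p : ℤ × ℤ) : ℤ × ℤ := (p.1 + p.2, p.2)

def Shat (p : ℤ × ℤ) : ℤ × ℤ := (3 * p.1 - 2 * p.2 + 1, 2 * p.1 - p.2 + 1)

def applyWord (w : List Bool) (p : ℤ × ℤ) : ℤ × ℤ :=
  w.foldr (fun b q => if b then Shat q else Ghat q) p

def Reachable (p : ℤ × ℤ) : Prop := ∃ w : List Bool, applyWord w (1, 1) = p

theorem ghat_iterate (n : ℕ) (x y : ℤ) : Ghat^[n] (x, y) = (x + n * y, y) := by
  induction n with
  | zero => simp
  | succ n ih =>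
    rw [Function.iterate_succ_apply', ih, Ghat, Prod.mk.injEq]
    push_cast
    constructor <;> ring

theorem shat_iterate (n : ℕ) (x y : ℤ) :
    Shat^[n] (x, y) = (x + n * (2 * (x - y) + 1), y + n * (2 * (x - y) + 1)) := by
  induction n with
  | zero => simp
  | succ n ih =>
    rw [Function.iterate_succ_apply', ih, Shat, Prod.mk.injEq]
    push_cast
    constructor <;> ring

namespace Reachable

theorem one_one : Reachable (1, 1) := ⟨[], rfl⟩

theorem ghat {p : ℤ × ℤ} (h : Reachable p) : Reachable (Ghat p) :=
  let ⟨w, hw⟩ := h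
  ⟨false :: w, by rw [← hw]; rfl⟩

theorem shat {p : ℤ × ℤ} (h : Reachable p) : Reachable (Shat p) :=
  let ⟨w, hw⟩ := h
  ⟨true :: w, by rw [← hw]; rfl⟩

theorem add_mul_snd {x y n : ℤ} (h : Reachable (x, y)) (hn : 0 ≤ n) :
    Reachable (x + n * y, y) := by
  lift n to ℕ using hn
  rw [← ghat_iterate]
  exact Function.Iterate.rec Reachable h (fun _ => ghat) n

theorem add_mul_sub {x y n : ℤ} (h : Reachable (x, y)) (hn : 0 ≤ n) :
    Reachable (x + n * (2 * (x - y) + 1), y + n * (2 * (x - y) + 1)) := by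
  lift n to ℕ using hn
  rw [← shat_iterate]
  exact Function.Iterate.rec Reachable h (fun _ => shat) n

end Reachable

theorem quadruple_reachable (k d i j : ℤ) (hk : 1 ≤ k) (hd : 1 ≤ d)
    (hi : 0 ≤ i) (hj : 0 ≤ j) :
    Reachable (k * d + i * d + j * (i + 1) * (2 * (k - 1) * d + 1),
               d + j * (2 * (k - 1) * d + 1)) := by
  have hdd : Reachable (d, d) := by
    convert Reachable.one_one.add_mul_sub (n := d - 1) (by omega) using 2 <;> ring
  have hkd : Reachable (k * d, d) := by
    convert hdd.add_mul_snd (n := k - 1) (by omega) using 2; ring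
  have hj' : Reachable (k * d + j * (2 * (k - 1) * d + 1), d + j * (2 * (k - 1) * d + 1)) := by
    convert hkd.add_mul_sub hj using 2 <;> ring
  convert hj'.add_mul_snd hi using 2; ring
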